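/- Assume s ≥ 1, κ ≥ 1, μ ≥ μ_h, 0 < ε ≤ 1/15, and set ξ = ε/(10√(2s)·κ). Suppose ‖𝒜_i*(y) − h_{i0}x_{i0}*‖ ≤ ξ·d_{i0} (operator norm) for every i = 1,…,s. For each i let d_i = ‖𝒜_i*(y)‖ (operator norm); let ĥ_{i0} ∈ ℂ^K, x̂_{i0} ∈ ℂ^N be unit vectors such that ‖𝒜_i*(y) − d_i ĥ_{i0} x̂_{i0}*‖ ≤ ‖𝒜_i*(y) − Z‖ for every Z ∈ ℂ^{K×N} of rank at most one; let u_i^{(0)} ∈ Q_i := {z ∈ ℂ^K : √L‖Bz‖_∞ ≤ 2√d_i·μ} satisfy ‖u_i^{(0)} − √d_i ĥ_{i0}‖ ≤ ‖z − √d_i ĥ_{i0}‖ for all z ∈ Q_i; and set v_i^{(0)} = √d_i·x̂_{i0}. Then for every i: 0.9·d_{i0} ≤ d_i ≤ 1.1·d_{i0}; ‖u_i^{(0)}‖ ≤ (2/√3)√d_{i0}; ‖v_i^{(0)}‖ ≤ (2/√3)√d_{i0}; √L‖Bu_i^{(0)}‖_∞ ≤ (4/√3)√d_{i0}·μ; and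 ‖u_i^{(0)}(v_i^{(0)})* − h_{i0}x_{i0}*‖_F ≤ 5ξ·d_{i0} ≤ (2ε/(5√s·κ))·d_{i0}. -/

import Mathlib

noncomputable section
open Finset ComplexConjugate

namespace RGD

/-- Squared Euclidean norm of a complex vector. -/
def vnormSq {n : ℕ} (v : Fin n → ℂ) : ℝ := ∑ j, ‖v j‖ ^ 2

/-- Euclidean norm of a complex vector. -/
def vnorm {n : ℕ} (v : Fin n → ℂ) : ℝ := Real.sqrt (vnormSq v)

/-- Inner product, conjugate-linear in the first argument. -/
def vinner {n : ℕ} (u v : Fin n → ℂ) : ℂ := ∑ j, conj (u j) * v j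

/-- Squared Frobenius norm of a matrix. -/
def frobSq {K N : ℕ} (Z : Matrix (Fin K) (Fin N) ℂ) : ℝ := ∑ k, ∑ j, ‖Z k j‖ ^ 2

/-- Frobenius norm of a matrix. -/
def frob {K N : ℕ} (Z : Matrix (Fin K) (Fin N) ℂ) : ℝ := Real.sqrt (frobSq Z)

/-- Frobenius inner product `⟨U,V⟩ = Tr(U*V)`, conjugate-linear in the first argument. -/
def finner {K N : ℕ} (U V : Matrix (Fin K) (Fin N) ℂ) : ℂ := ∑ k, ∑ j, conj (U k j) * V k j

/-- Spectral (operator) norm of a matrix: sup of `‖Zv‖` over the closed unit ball. -/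
def opNorm {K N : ℕ} (Z : Matrix (Fin K) (Fin N) ℂ) : ℝ :=
  sSup {r : ℝ | ∃ v : Fin N → ℂ, vnorm v ≤ 1 ∧ r = vnorm (Z.mulVec v)}

/-- Squared Frobenius norm of a block-diagonal matrix, given by its diagonal blocks. -/
def famFrobSq {K N s : ℕ} (Z : Fin s → Matrix (Fin K) (Fin N) ℂ) : ℝ := ∑ i, frobSq (Z i)

/-- Frobenius norm of a block-diagonal matrix, given by its diagonal blocks. -/
def famFrob {K N s : ℕ} (Z : Fin s → Matrix (Fin K) (Fin N) ℂ) : ℝ := Real.sqrt (famFrobSq Z)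

/-- The rank-one matrix `u v*`. -/
def rankOne {K N : ℕ} (u : Fin K → ℂ) (v : Fin N → ℂ) : Matrix (Fin K) (Fin N) ℂ :=
  Matrix.of fun k j => u k * conj (v j)

/-- `ℋ(h,x)`: block-diagonal matrix with `i`-th block `hᵢ xᵢ*`. -/
def Hmap {K N s : ℕ} (h : Fin s → Fin K → ℂ) (x : Fin s → Fin N → ℂ) :
    Fin s → Matrix (Fin K) (Fin N) ℂ := fun i => rankOne (h i) (x i)

/-- `𝒜ᵢ(Z) = (bₗ* Z aₗ)ₗ`. -/
def calAi {K N L : ℕ} (b : Fin L → Fin K → ℂ) (a : Fin L → Fin N → ℂ)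
    (Z : Matrix (Fin K) (Fin N) ℂ) : Fin L → ℂ :=
  fun l => vinner (b l) (Z.mulVec (a l))

/-- `𝒜(Z) = Σᵢ 𝒜ᵢ(Zᵢ)` on block-diagonal matrices. -/
def calA {K N L s : ℕ} (b : Fin L → Fin K → ℂ) (a : Fin s → Fin L → Fin N → ℂ)
    (Z : Fin s → Matrix (Fin K) (Fin N) ℂ) : Fin L → ℂ :=
  fun l => ∑ i, calAi b (a i) (Z i) l

/-- `𝒜ᵢ*(z) = Σₗ zₗ bₗ aₗ*`. -/
def calAdj {K N L : ℕ} (b : Fin L → Fin K → ℂ) (a : Fin L → Fin N → ℂ)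
    (z : Fin L → ℂ) : Matrix (Fin K) (Fin N) ℂ :=
  Matrix.of fun k j => ∑ l, z l * b l k * conj (a l j)

/-- `‖𝒜*(e)‖ = maxᵢ ‖𝒜ᵢ*(e)‖` (operator norms). -/
def AadjNorm {K N L s : ℕ} (b : Fin L → Fin K → ℂ) (a : Fin s → Fin L → Fin N → ℂ)
    (e : Fin L → ℂ) : ℝ :=
  ⨆ i : Fin s, opNorm (calAdj b (a i) e)

/-- `B*B = I_K`, expressed in terms of the columns `bₗ` of `B*`. -/
def BtBeqI {K L : ℕ} (b : Fin L → Fin K → ℂ) : Prop :=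
  ∀ k k' : Fin K, (∑ l, b l k * conj (b l k')) = if k = k' then (1 : ℂ) else 0

/-- `μ ≥ μ_h`, i.e. `√L ‖B h_{i0}‖_∞ ≤ μ ‖h_{i0}‖` for all `i`. -/
def muhLe {K L s : ℕ} (b : Fin L → Fin K → ℂ) (h0 : Fin s → Fin K → ℂ) (μ : ℝ) : Prop :=
  ∀ i l, Real.sqrt L * ‖vinner (b l) (h0 i)‖ ≤ μ * vnorm (h0 i)

/-- `d₀ = √(Σᵢ d_{i0}²)`. -/
def dtot {s : ℕ} (d0 : Fin s → ℝ) : ℝ := Real.sqrt (∑ i, d0 i ^ 2)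

/-- Condition number `κ = (maxᵢ d_{i0}) / (minᵢ d_{i0})`. -/
def kappa {s : ℕ} (d0 : Fin s → ℝ) : ℝ := (⨆ i, d0 i) / (⨅ i, d0 i)

/-- The observation `y = 𝒜(ℋ(h₀,x₀)) + e`. -/
def yvec {K N L s : ℕ} (b : Fin L → Fin K → ℂ) (a : Fin s → Fin L → Fin N → ℂ)
    (h0 : Fin s → Fin K → ℂ) (x0 : Fin s → Fin N → ℂ) (e : Fin L → ℂ) : Fin L → ℂ :=
  fun l => calA b a (Hmap h0 x0) l + e l

/-- `F(h,x) = ‖𝒜(ℋ(h,x)) − y‖²`. -/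
def Fobj {K N L s : ℕ} (b : Fin L → Fin K → ℂ) (a : Fin s → Fin L → Fin N → ℂ)
    (h0 : Fin s → Fin K → ℂ) (x0 : Fin s → Fin N → ℂ) (e : Fin L → ℂ)
    (h : Fin s → Fin K → ℂ) (x : Fin s → Fin N → ℂ) : ℝ :=
  vnormSq (fun l => calA b a (Hmap h x) l - yvec b a h0 x0 e l)

def G0 (z : ℝ) : ℝ := max (z - 1) 0 ^ 2

def G0' (z : ℝ) : ℝ := 2 * max (z - 1) 0

/-- The `i`-th regularizer `Gᵢ(hᵢ,xᵢ)` (including the factor `ρ`). -/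
def Gi {K N L : ℕ} (b : Fin L → Fin K → ℂ) (ρ μ di : ℝ)
    (hi : Fin K → ℂ) (xi : Fin N → ℂ) : ℝ :=
  ρ * (G0 (vnormSq hi / (2 * di)) + G0 (vnormSq xi / (2 * di))
    + ∑ l, G0 ((L : ℝ) * ‖vinner (b l) hi‖ ^ 2 / (8 * di * μ ^ 2)))

/-- The regularizer `G(h,x) = Σᵢ Gᵢ(hᵢ,xᵢ)`. -/
def Greg {K N L s : ℕ} (b : Fin L → Fin K → ℂ) (ρ μ : ℝ) (dd : Fin s → ℝ)
    (h : Fin s → Fin K → ℂ) (x : Fin s → Fin N → ℂ) : ℝ :=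
  ∑ i, Gi b ρ μ (dd i) (h i) (x i)

/-- `F̃ = F + G`. -/
def Ftil {K N L s : ℕ} (b : Fin L → Fin K → ℂ) (a : Fin s → Fin L → Fin N → ℂ)
    (h0 : Fin s → Fin K → ℂ) (x0 : Fin s → Fin N → ℂ) (e : Fin L → ℂ)
    (ρ μ : ℝ) (dd : Fin s → ℝ)
    (h : Fin s → Fin K → ℂ) (x : Fin s → Fin N → ℂ) : ℝ :=
  Fobj b a h0 x0 e h x + Greg b ρ μ dd h x

/-- The residual `𝒜(ℋ(h,x)) − y`. -/
def residual {K N L s : ℕ} (b : Fin L → Fin K → ℂ) (a : Fin s → Fin L → Fin N → ℂ)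
    (h0 : Fin s → Fin K → ℂ) (x0 : Fin s → Fin N → ℂ) (e : Fin L → ℂ)
    (h : Fin s → Fin K → ℂ) (x : Fin s → Fin N → ℂ) : Fin L → ℂ :=
  fun l => calA b a (Hmap h x) l - yvec b a h0 x0 e l

/-- Wirtinger gradient `∇F_{hᵢ} = 𝒜ᵢ*(𝒜(ℋ(h,x)) − y) xᵢ`. -/
def gradFh {K N L s : ℕ} (b : Fin L → Fin K → ℂ) (a : Fin s → Fin L → Fin N → ℂ)
    (h0 : Fin s → Fin K → ℂ) (x0 : Fin s → Fin N → ℂ) (e : Fin L → ℂ)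
    (h : Fin s → Fin K → ℂ) (x : Fin s → Fin N → ℂ) (i : Fin s) : Fin K → ℂ :=
  (calAdj b (a i) (residual b a h0 x0 e h x)).mulVec (x i)

/-- Wirtinger gradient `∇F_{xᵢ} = (𝒜ᵢ*(𝒜(ℋ(h,x)) − y))* hᵢ`. -/
def gradFx {K N L s : ℕ} (b : Fin L → Fin K → ℂ) (a : Fin s → Fin L → Fin N → ℂ)
    (h0 : Fin s → Fin K → ℂ) (x0 : Fin s → Fin N → ℂ) (e : Fin L → ℂ)
    (h : Fin s → Fin K → ℂ) (x : Fin s → Fin N → ℂ) (i : Fin s) : Fin N → ℂ :=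
  (calAdj b (a i) (residual b a h0 x0 e h x)).conjTranspose.mulVec (h i)

/-- Wirtinger gradient `∇G_{hᵢ}`. -/
def gradGh {K L s : ℕ} (b : Fin L → Fin K → ℂ) (ρ μ : ℝ) (dd : Fin s → ℝ)
    (h : Fin s → Fin K → ℂ) (i : Fin s) : Fin K → ℂ :=
  fun k => ((ρ / (2 * dd i) : ℝ) : ℂ) *
    (((G0' (vnormSq (h i) / (2 * dd i)) : ℝ) : ℂ) * h i k
      + (((L : ℝ) / (4 * μ ^ 2) : ℝ) : ℂ) *
        ∑ l, ((G0' ((L : ℝ) * ‖vinner (b l) (h i)‖ ^ 2 / (8 * dd i * μ ^ 2)) : ℝ) : ℂ)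
          * (vinner (b l) (h i) * b l k))

/-- Wirtinger gradient `∇G_{xᵢ}`. -/
def gradGx {N s : ℕ} (ρ : ℝ) (dd : Fin s → ℝ)
    (x : Fin s → Fin N → ℂ) (i : Fin s) : Fin N → ℂ :=
  fun j => ((ρ / (2 * dd i) : ℝ) : ℂ) * (((G0' (vnormSq (x i) / (2 * dd i)) : ℝ) : ℂ) * x i j)

/-- `∇F̃_{hᵢ} = ∇F_{hᵢ} + ∇G_{hᵢ}`. -/
def gradH {K N L s : ℕ} (b : Fin L → Fin K → ℂ) (a : Fin s → Fin L → Fin N → ℂ)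
    (h0 : Fin s → Fin K → ℂ) (x0 : Fin s → Fin N → ℂ) (e : Fin L → ℂ)
    (ρ μ : ℝ) (dd : Fin s → ℝ)
    (h : Fin s → Fin K → ℂ) (x : Fin s → Fin N → ℂ) (i : Fin s) : Fin K → ℂ :=
  fun k => gradFh b a h0 x0 e h x i k + gradGh b ρ μ dd h i k

/-- `∇F̃_{xᵢ} = ∇F_{xᵢ} + ∇G_{xᵢ}`. -/
def gradX {K N L s : ℕ} (b : Fin L → Fin K → ℂ) (a : Fin s → Fin L → Fin N → ℂ)
    (h0 : Fin s → Fin K → ℂ) (x0 : Fin s → Fin N → ℂ) (e : Fin L → ℂ)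
    (ρ μ : ℝ) (dd : Fin s → ℝ)
    (h : Fin s → Fin K → ℂ) (x : Fin s → Fin N → ℂ) (i : Fin s) : Fin N → ℂ :=
  fun j => gradFx b a h0 x0 e h x i j + gradGx ρ dd x i j

/-- `‖∇F̃(h,x)‖²` (squared norm of the stacked Wirtinger gradient). -/
def gradNormSq {K N L s : ℕ} (b : Fin L → Fin K → ℂ) (a : Fin s → Fin L → Fin N → ℂ)
    (h0 : Fin s → Fin K → ℂ) (x0 : Fin s → Fin N → ℂ) (e : Fin L → ℂ)
    (ρ μ : ℝ) (dd : Fin s → ℝ)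
    (h : Fin s → Fin K → ℂ) (x : Fin s → Fin N → ℂ) : ℝ :=
  ∑ i, vnormSq (gradH b a h0 x0 e ρ μ dd h x i) + ∑ i, vnormSq (gradX b a h0 x0 e ρ μ dd h x i)

/-- `‖∇F̃(h',x') − ∇F̃(h,x)‖²`. -/
def gradDiffNormSq {K N L s : ℕ} (b : Fin L → Fin K → ℂ) (a : Fin s → Fin L → Fin N → ℂ)
    (h0 : Fin s → Fin K → ℂ) (x0 : Fin s → Fin N → ℂ) (e : Fin L → ℂ)
    (ρ μ : ℝ) (dd : Fin s → ℝ)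
    (h : Fin s → Fin K → ℂ) (x : Fin s → Fin N → ℂ)
    (h' : Fin s → Fin K → ℂ) (x' : Fin s → Fin N → ℂ) : ℝ :=
  ∑ i, vnormSq (fun k => gradH b a h0 x0 e ρ μ dd h' x' i k - gradH b a h0 x0 e ρ μ dd h x i k)
  + ∑ i, vnormSq (fun j => gradX b a h0 x0 e ρ μ dd h' x' i j - gradX b a h0 x0 e ρ μ dd h x i j)

/-- Membership in `𝒩_d`. -/
def inNd {K N s : ℕ} (d0 : Fin s → ℝ)
    (h : Fin s → Fin K → ℂ) (x : Fin s → Fin N → ℂ) : Prop :=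
  ∀ i, vnorm (h i) ≤ 2 * Real.sqrt (d0 i) ∧ vnorm (x i) ≤ 2 * Real.sqrt (d0 i)

/-- Membership in `𝒩_μ`. -/
def inNmu {K L s : ℕ} (b : Fin L → Fin K → ℂ) (d0 : Fin s → ℝ) (μ : ℝ)
    (h : Fin s → Fin K → ℂ) : Prop :=
  ∀ i, ∀ l, Real.sqrt L * ‖vinner (b l) (h i)‖ ≤ 4 * Real.sqrt (d0 i) * μ

/-- `δᵢ(hᵢ,xᵢ) = ‖hᵢxᵢ* − h_{i0}x_{i0}*‖_F / d_{i0}`. -/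
def deltaI {K N : ℕ} (h0i : Fin K → ℂ) (x0i : Fin N → ℂ) (d0i : ℝ)
    (hi : Fin K → ℂ) (xi : Fin N → ℂ) : ℝ :=
  frob (rankOne hi xi - rankOne h0i x0i) / d0i

/-- Membership in `𝒩_ε`. -/
def inNeps {K N s : ℕ} (h0 : Fin s → Fin K → ℂ) (x0 : Fin s → Fin N → ℂ)
    (d0 : Fin s → ℝ) (ε : ℝ)
    (h : Fin s → Fin K → ℂ) (x : Fin s → Fin N → ℂ) : Prop :=
  ∀ i, deltaI (h0 i) (x0 i) (d0 i) (h i) (x i) ≤ ε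

/-- The global relative error `δ(h,x) = ‖ℋ(h,x) − X₀‖_F / d₀`. -/
def deltaTot {K N s : ℕ} (h0 : Fin s → Fin K → ℂ) (x0 : Fin s → Fin N → ℂ)
    (d0 : Fin s → ℝ)
    (h : Fin s → Fin K → ℂ) (x : Fin s → Fin N → ℂ) : ℝ :=
  famFrob (fun i => Hmap h x i - Hmap h0 x0 i) / dtot d0

/-- Membership in `𝒩_F̃`. -/
def inNF {K N L s : ℕ} (b : Fin L → Fin K → ℂ) (a : Fin s → Fin L → Fin N → ℂ)
    (h0 : Fin s → Fin K → ℂ) (x0 : Fin s → Fin N → ℂ) (e : Fin L → ℂ)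
    (d0 : Fin s → ℝ) (ρ μ : ℝ) (dd : Fin s → ℝ) (ε : ℝ)
    (h : Fin s → Fin K → ℂ) (x : Fin s → Fin N → ℂ) : Prop :=
  Ftil b a h0 x0 e ρ μ dd h x ≤ ε ^ 2 * dtot d0 ^ 2 / (3 * (s : ℝ) * kappa d0 ^ 2) + vnormSq e

/-- The Local Restricted Isometry Property on `𝒩_d ∩ 𝒩_μ ∩ 𝒩_ε`. -/
def LocalRIP {K N L s : ℕ} (b : Fin L → Fin K → ℂ) (a : Fin s → Fin L → Fin N → ℂ)
    (h0 : Fin s → Fin K → ℂ) (x0 : Fin s → Fin N → ℂ)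
    (d0 : Fin s → ℝ) (μ ε : ℝ) : Prop :=
  ∀ (h : Fin s → Fin K → ℂ) (x : Fin s → Fin N → ℂ),
    inNd d0 h x → inNmu b d0 μ h → inNeps h0 x0 d0 ε h x →
      (2 / 3) * famFrobSq (fun i => Hmap h x i - Hmap h0 x0 i)
          ≤ vnormSq (calA b a fun i => Hmap h x i - Hmap h0 x0 i)
      ∧ vnormSq (calA b a fun i => Hmap h x i - Hmap h0 x0 i)
          ≤ (3 / 2) * famFrobSq (fun i => Hmap h x i - Hmap h0 x0 i)

/-- `α_{i1} = ⟨h_{i0}, hᵢ⟩ / d_{i0}`. -/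
def alpha1 {K s : ℕ} (h0 : Fin s → Fin K → ℂ) (d0 : Fin s → ℝ)
    (h : Fin s → Fin K → ℂ) (i : Fin s) : ℂ :=
  vinner (h0 i) (h i) / ((d0 i : ℝ) : ℂ)

/-- `α_{i2} = ⟨x_{i0}, xᵢ⟩ / d_{i0}`. -/
def alpha2 {N s : ℕ} (x0 : Fin s → Fin N → ℂ) (d0 : Fin s → ℝ)
    (x : Fin s → Fin N → ℂ) (i : Fin s) : ℂ :=
  vinner (x0 i) (x i) / ((d0 i : ℝ) : ℂ)

/-- `δ₀ = δ/10`. -/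
def delta0 {K N s : ℕ} (h0 : Fin s → Fin K → ℂ) (x0 : Fin s → Fin N → ℂ)
    (d0 : Fin s → ℝ) (h : Fin s → Fin K → ℂ) (x : Fin s → Fin N → ℂ) : ℝ :=
  deltaTot h0 x0 d0 h x / 10

/-- `αᵢ = (1−δ₀)α_{i1}` if `‖hᵢ‖ ≥ ‖xᵢ‖`, else `1/((1−δ₀) conj(α_{i2}))`. -/
def alphaC {K N s : ℕ} (h0 : Fin s → Fin K → ℂ) (x0 : Fin s → Fin N → ℂ)
    (d0 : Fin s → ℝ) (h : Fin s → Fin K → ℂ) (x : Fin s → Fin N → ℂ) (i : Fin s) : ℂ :=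
  if vnorm (x i) ≤ vnorm (h i)
  then ((1 - delta0 h0 x0 d0 h x : ℝ) : ℂ) * alpha1 h0 d0 h i
  else 1 / (((1 - delta0 h0 x0 d0 h x : ℝ) : ℂ) * conj (alpha2 x0 d0 x i))

/-- `Δhᵢ = hᵢ − αᵢ h_{i0}`. -/
def dh {K N s : ℕ} (h0 : Fin s → Fin K → ℂ) (x0 : Fin s → Fin N → ℂ)
    (d0 : Fin s → ℝ) (h : Fin s → Fin K → ℂ) (x : Fin s → Fin N → ℂ) (i : Fin s) :
    Fin K → ℂ :=
  fun k => h i k - alphaC h0 x0 d0 h x i * h0 i k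

/-- `Δxᵢ = xᵢ − conj(αᵢ)⁻¹ x_{i0}`. -/
def dx {K N s : ℕ} (h0 : Fin s → Fin K → ℂ) (x0 : Fin s → Fin N → ℂ)
    (d0 : Fin s → ℝ) (h : Fin s → Fin K → ℂ) (x : Fin s → Fin N → ℂ) (i : Fin s) :
    Fin N → ℂ :=
  fun j => x i j - (conj (alphaC h0 x0 d0 h x i))⁻¹ * x0 i j

/-- `σ²_max(h,x) = maxₗ Σᵢ |bₗ*hᵢ|² ‖xᵢ‖²`. -/
def sigmaMaxSq {K N L s : ℕ} (b : Fin L → Fin K → ℂ)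
    (h : Fin s → Fin K → ℂ) (x : Fin s → Fin N → ℂ) : ℝ :=
  ⨆ l : Fin L, ∑ i, ‖vinner (b l) (h i)‖ ^ 2 * vnormSq (x i)

/-- The rank-one bound (Lemma: `𝒜` on block-diagonal matrices with rank-1 blocks). -/
def RankOneBound {K N L s : ℕ} (b : Fin L → Fin K → ℂ)
    (a : Fin s → Fin L → Fin N → ℂ) : Prop :=
  ∀ (h : Fin s → Fin K → ℂ) (x : Fin s → Fin N → ℂ),
    vnormSq (calA b a (Hmap h x)) ≤
      4 / 3 * famFrobSq (Hmap h x)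
      + 2 * Real.sqrt (2 * (s : ℝ) * famFrobSq (Hmap h x) * sigmaMaxSq b h x
          * ((K : ℝ) + N) * Real.log L)
      + 8 * (s : ℝ) * sigmaMaxSq b h x * ((K : ℝ) + N) * Real.log L

/-- The subspace `Tᵢ = {h_{i0} v* + u x_{i0}*}`. -/
def Tspace {K N : ℕ} (h0i : Fin K → ℂ) (x0i : Fin N → ℂ) :
    Set (Matrix (Fin K) (Fin N) ℂ) :=
  {Z | ∃ (u : Fin K → ℂ) (v : Fin N → ℂ), Z = rankOne h0i v + rankOne u x0i}

/-- `P` is the orthogonal projection onto `Tᵢ` w.r.t. the Frobenius inner product. -/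
def IsFrobProj {K N : ℕ} (h0i : Fin K → ℂ) (x0i : Fin N → ℂ)
    (P : Matrix (Fin K) (Fin N) ℂ → Matrix (Fin K) (Fin N) ℂ) : Prop :=
  ∀ Z, P Z ∈ Tspace h0i x0i ∧ ∀ W ∈ Tspace h0i x0i, finner W (Z - P Z) = 0

/-- Operator norm of `𝒜ᵢ` from `(ℂ^{K×N}, ‖·‖_F)` to `(ℂ^L, ‖·‖)`. -/
def calAiOpNorm {K N L : ℕ} (b : Fin L → Fin K → ℂ) (a : Fin L → Fin N → ℂ) : ℝ :=
  sSup {r : ℝ | ∃ Z : Matrix (Fin K) (Fin N) ℂ, frob Z ≤ 1 ∧ r = vnorm (calAi b a Z)}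

/-- Operator norm of `𝒜` from block-diagonal matrices with `‖·‖_F` to `ℂ^L`. -/
def calAOpNorm {K N L s : ℕ} (b : Fin L → Fin K → ℂ)
    (a : Fin s → Fin L → Fin N → ℂ) : ℝ :=
  sSup {r : ℝ | ∃ Z : Fin s → Matrix (Fin K) (Fin N) ℂ, famFrob Z ≤ 1 ∧ r = vnorm (calA b a Z)}

/-- Norm of a stacked vector in `ℂ^{ns}`. -/
def stackNorm {n s : ℕ} (u : Fin s → Fin n → ℂ) : ℝ := Real.sqrt (∑ i, vnormSq (u i))

/-- Norm of a point `z = (h,x) ∈ ℂ^{s(K+N)}`. -/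
def pairNorm {K N s : ℕ} (u : Fin s → Fin K → ℂ) (v : Fin s → Fin N → ℂ) : ℝ :=
  Real.sqrt (∑ i, vnormSq (u i) + ∑ i, vnormSq (v i))

/-- `z + t • w` componentwise, `t` real. -/
def shiftV {n s : ℕ} (u w : Fin s → Fin n → ℂ) (t : ℝ) : Fin s → Fin n → ℂ :=
  fun i k => u i k + (t : ℂ) * w i k

/-- `σ_max(h) = maxₗ √(Σᵢ |bₗ*hᵢ|²)` (unit `xᵢ`'s). -/
def sigmaMaxU {K L s : ℕ} (b : Fin L → Fin K → ℂ) (h : Fin s → Fin K → ℂ) : ℝ :=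
  ⨆ l, Real.sqrt (∑ i, ‖vinner (b l) (h i)‖ ^ 2)

/-! The bound on `dᵢ` is the triangle inequality for the operator norm, since
`‖h_{i0} x_{i0}*‖ = d_{i0}`. The set `Qᵢ` is star-shaped about `0`, so the projection `u_i^{(0)}`
of `√dᵢ ĥ_{i0}` onto it is no longer than `√dᵢ ĥ_{i0}`: otherwise shrinking it would bring it
closer.

For the Frobenius bound, pass through the best rank-one approximation `D = dᵢ ĥ_{i0} x̂_{i0}*`.
Since `h_{i0} x_{i0}*` is a competitor, `‖D - h_{i0} x_{i0}*‖ ≤ 2ξ d_{i0}`, and `D - h_{i0} x_{i0}*`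
has rank two, so its Frobenius norm is at most `√2` times its operator norm. The remaining term is
`√dᵢ ‖u_i^{(0)} - √dᵢ ĥ_{i0}‖`; comparing `u_i^{(0)}` with the point
`(⟨x_{i0}, x̂_{i0}⟩ / √dᵢ) h_{i0}` of `Qᵢ` bounds it by `‖(D - h_{i0} x_{i0}*) x̂_{i0}‖`. -/

open scoped Matrix Matrix.Norms.L2Operator InnerProductSpace

section InnerProductSpace

variable {F : Type*} [NormedAddCommGroup F] [InnerProductSpace ℝ F]

theorem norm_smul_sub_lt_norm_sub {u w : F} (h : ‖w‖ < ‖u‖) :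
    ‖(‖w‖ / ‖u‖) • u - w‖ < ‖u - w‖ := by
  have hu : 0 < ‖u‖ := (norm_nonneg w).trans_lt h
  set t := ‖w‖ / ‖u‖
  have ht : t * ‖u‖ = ‖w‖ := div_mul_cancel₀ _ hu.ne'
  have ht1 : t < 1 := (div_lt_one hu).2 h
  have hinner : ⟪u, w⟫_ℝ ≤ ‖u‖ * (t * ‖u‖) := ht ▸ real_inner_le_norm u w
  refine lt_of_pow_lt_pow_left₀ 2 (norm_nonneg _) ?_
  rw [norm_sub_sq_real, norm_sub_sq_real, norm_smul, real_inner_smul_left, Real.norm_eq_abs,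
    abs_of_nonneg (by positivity : 0 ≤ t)]
  nlinarith [mul_pos (mul_pos hu hu) (mul_pos (sub_pos.2 ht1) (sub_pos.2 ht1))]

theorem norm_le_of_isMinOn_norm_sub {Q : Set F} (hQ : StarConvex ℝ 0 Q) {u w : F} (hu : u ∈ Q)
    (hmin : IsMinOn (fun z => ‖z - w‖) Q u) : ‖u‖ ≤ ‖w‖ := by
  by_contra! h
  have hmem : (‖w‖ / ‖u‖) • u ∈ Q :=
    hQ.smul_mem hu (by positivity) (div_le_one_of_le₀ h.le (norm_nonneg _))
  exact (hmin hmem).not_gt (norm_smul_sub_lt_norm_sub h)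

theorem norm_le_norm_add_of_inner_eq_zero {𝕜 E : Type*} [RCLike 𝕜] [NormedAddCommGroup E]
    [InnerProductSpace 𝕜 E] {x y : E} (h : ⟪x, y⟫_𝕜 = 0) : ‖y‖ ≤ ‖x + y‖ := by
  have := norm_add_sq_eq_norm_sq_add_norm_sq_of_inner_eq_zero x y h
  nlinarith [norm_nonneg x, norm_nonneg y, norm_nonneg (x + y)]

end InnerProductSpace

section Bridge

variable {n K N : ℕ}

theorem vnorm_eq_norm (v : Fin n → ℂ) : vnorm v = ‖WithLp.toLp 2 v‖ := by
  rw [EuclideanSpace.norm_eq]; rfl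

theorem vinner_eq_inner (u v : Fin n → ℂ) :
    vinner u v = ⟪WithLp.toLp 2 u, WithLp.toLp 2 v⟫_ℂ := by
  simp [vinner, PiLp.inner_apply, mul_comm]

theorem vnorm_nonneg (v : Fin n → ℂ) : 0 ≤ vnorm v := Real.sqrt_nonneg _

theorem vnorm_smul (c : ℂ) (v : Fin n → ℂ) : vnorm (fun k => c * v k) = ‖c‖ * vnorm v := by
  simp only [vnorm_eq_norm, ← smul_eq_mul, ← Pi.smul_def, WithLp.toLp_smul, norm_smul]

theorem vinner_self (v : Fin n → ℂ) : vinner v v = (vnorm v : ℂ) ^ 2 := by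
  rw [vinner_eq_inner, inner_self_eq_norm_sq_to_K, vnorm_eq_norm]
  rfl

theorem norm_vinner_le (u v : Fin n → ℂ) : ‖vinner u v‖ ≤ vnorm u * vnorm v := by
  rw [vinner_eq_inner, vnorm_eq_norm, vnorm_eq_norm]
  exact norm_inner_le_norm _ _

theorem vinner_smul_right (c : ℂ) (u v : Fin n → ℂ) :
    vinner u (c • v) = c * vinner u v := by
  rw [vinner_eq_inner, vinner_eq_inner, WithLp.toLp_smul, inner_smul_right]

theorem vnorm_ofReal_mul_of_vnorm_eq_one {t : ℝ} (ht : 0 ≤ t) {v : Fin n → ℂ} (hv : vnorm v = 1) :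
    vnorm (fun k => (t : ℂ) * v k) = t := by
  rw [vnorm_smul, hv, Complex.norm_real, Real.norm_of_nonneg ht, mul_one]

theorem opNorm_eq_norm (Z : Matrix (Fin K) (Fin N) ℂ) : opNorm Z = ‖Z‖ := by
  rw [Matrix.l2_opNorm_def, ← ContinuousLinearMap.sSup_unitClosedBall_eq_norm, opNorm]
  congr 1
  ext r
  simp only [Set.mem_ofPred_eq, Set.mem_image, Metric.mem_closedBall, dist_zero_right]
  constructor
  · rintro ⟨v, hv, rfl⟩
    exact ⟨WithLp.toLp 2 v, by rwa [← vnorm_eq_norm], by simp [vnorm_eq_norm]⟩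
  · rintro ⟨v, hv, rfl⟩
    exact ⟨v.ofLp, by rwa [vnorm_eq_norm], by simp [vnorm_eq_norm, Matrix.toLpLin_apply]⟩

theorem vnorm_mulVec_le (Z : Matrix (Fin K) (Fin N) ℂ) (v : Fin N → ℂ) :
    vnorm (Z *ᵥ v) ≤ ‖Z‖ * vnorm v := by
  simpa [vnorm_eq_norm] using Z.l2_opNorm_mulVec (WithLp.toLp 2 v)

theorem frob_eq_norm (Z : Matrix (Fin K) (Fin N) ℂ) :
    frob Z = ‖WithLp.toLp 2 (Function.uncurry Z)‖ := by
  rw [EuclideanSpace.norm_eq, Fintype.sum_prod_type]; rfl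

theorem finner_eq_inner (U V : Matrix (Fin K) (Fin N) ℂ) :
    finner U V = ⟪WithLp.toLp 2 (Function.uncurry U), WithLp.toLp 2 (Function.uncurry V)⟫_ℂ := by
  simp only [finner, mul_comm, PiLp.inner_apply, RCLike.inner_apply, Fintype.sum_prod_type]
  rfl

theorem frob_add_le (A B : Matrix (Fin K) (Fin N) ℂ) : frob (A + B) ≤ frob A + frob B := by
  have hAB : WithLp.toLp 2 (Function.uncurry (A + B))
      = WithLp.toLp 2 (Function.uncurry A) + WithLp.toLp 2 (Function.uncurry B) := rfl
  rw [frob_eq_norm, frob_eq_norm, frob_eq_norm, hAB]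
  exact norm_add_le _ _

end Bridge

section RankOne

variable {K N : ℕ}

theorem rankOne_eq_vecMulVec (u : Fin K → ℂ) (v : Fin N → ℂ) :
    rankOne u v = Matrix.vecMulVec u (star v) := rfl

theorem rankOne_mulVec (u : Fin K → ℂ) (v z : Fin N → ℂ) :
    rankOne u v *ᵥ z = vinner v z • u := by
  ext k
  simp [rankOne_eq_vecMulVec, Matrix.vecMulVec_mulVec, vinner, dotProduct, mul_comm]

theorem norm_rankOne (u : Fin K → ℂ) (v : Fin N → ℂ) : ‖rankOne u v‖ = vnorm u * vnorm v := by
  rw [rankOne_eq_vecMulVec, ← InnerProductSpace.symm_toEuclideanLin_rankOne (𝕜 := ℂ),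
    Matrix.l2_opNorm_def, vnorm_eq_norm, vnorm_eq_norm, LinearEquiv.trans_apply,
    LinearEquiv.apply_symm_apply]
  exact InnerProductSpace.norm_rankOne _ _

theorem frob_rankOne (u : Fin K → ℂ) (v : Fin N → ℂ) : frob (rankOne u v) = vnorm u * vnorm v := by
  rw [frob, vnorm, vnorm, vnormSq, ← Real.sqrt_mul (Finset.sum_nonneg fun _ _ => by positivity),
    frobSq, vnormSq, Finset.sum_mul_sum]
  simp [rankOne, mul_pow]

theorem finner_rankOne (u u' : Fin K → ℂ) (v v' : Fin N → ℂ) :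
    finner (rankOne u v) (rankOne u' v') = vinner u u' * conj (vinner v v') := by
  simp only [finner, rankOne, Matrix.of_apply, vinner, map_sum, map_mul, Complex.conj_conj,
    Finset.sum_mul_sum]
  exact Finset.sum_congr rfl fun _ _ => Finset.sum_congr rfl fun _ _ => by ring

theorem rank_rankOne_le (u : Fin K → ℂ) (v : Fin N → ℂ) : (rankOne u v).rank ≤ 1 :=
  Matrix.rank_vecMulVec_le _ _

end RankOne

section RankTwo

variable {K N : ℕ}

theorem vnorm_mul_vnorm_le_norm_rankOne_add_rankOne {h p : Fin K → ℂ} (q x : Fin N → ℂ)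
    (hhp : vinner h p = 0) : vnorm p * vnorm x ≤ ‖rankOne h q + rankOne p x‖ := by
  set Z := rankOne h q + rankOne p x
  have hZx : WithLp.toLp 2 (Z *ᵥ x) =
      vinner q x • WithLp.toLp 2 h + (vnorm x : ℂ) ^ 2 • WithLp.toLp 2 p := by
    rw [Matrix.add_mulVec, rankOne_mulVec, rankOne_mulVec, vinner_eq_inner x x,
      inner_self_eq_norm_sq_to_K, ← vnorm_eq_norm]
    rfl
  have hlow : vnorm x ^ 2 * vnorm p ≤ vnorm (Z *ᵥ x) := by
    have horth : ⟪vinner q x • WithLp.toLp 2 h, (vnorm x : ℂ) ^ 2 • WithLp.toLp 2 p⟫_ℂ = 0 := by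
      rw [inner_smul_left, inner_smul_right, ← vinner_eq_inner, hhp, mul_zero, mul_zero]
    have := norm_le_norm_add_of_inner_eq_zero horth
    rwa [norm_smul, norm_pow, Complex.norm_real, Real.norm_eq_abs, sq_abs, ← vnorm_eq_norm,
      ← hZx, ← vnorm_eq_norm] at this
  have hup := vnorm_mulVec_le Z x
  have hx := vnorm_nonneg x
  nlinarith [vnorm_nonneg p, norm_nonneg Z]

theorem exists_vinner_eq_zero_rankOne_add_rankOne_eq (h c : Fin K → ℂ) (a x : Fin N → ℂ) :
    ∃ q p, vinner h p = 0 ∧ rankOne h a + rankOne c x = rankOne h q + rankOne p x := by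
  -- for `h = 0` the junk value `β = 0` still works: then `p = c` and `vinner h p = 0`
  set β := vinner h c / vinner h h
  refine ⟨a + star β • x, c - β • h, ?_, ?_⟩
  · have hβ : β * vinner h h = vinner h c := div_mul_cancel_of_imp fun hh => by
      rw [vinner_eq_inner, inner_self_eq_zero] at hh
      rw [vinner_eq_inner, hh, inner_zero_left]
    simp only [vinner_eq_inner, WithLp.toLp_sub, WithLp.toLp_smul, inner_sub_right,
      inner_smul_right] at hβ ⊢
    rw [hβ, sub_self]
  · ext k j
    simp only [rankOne, Matrix.add_apply, Matrix.of_apply, RCLike.star_def, Pi.add_apply,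
      Pi.smul_apply, smul_eq_mul, map_add, map_mul, RingHomCompTriple.comp_apply, RingHom.id_apply,
      Pi.sub_apply]
    ring

theorem frob_sq_rankOne_add_rankOne {h p : Fin K → ℂ} (q x : Fin N → ℂ) (hhp : vinner h p = 0) :
    frob (rankOne h q + rankOne p x) ^ 2 = (vnorm h * vnorm q) ^ 2 + (vnorm p * vnorm x) ^ 2 := by
  have horth : ⟪WithLp.toLp 2 (Function.uncurry (rankOne h q)),
      WithLp.toLp 2 (Function.uncurry (rankOne p x))⟫_ℂ = 0 := by
    rw [← finner_eq_inner, finner_rankOne, hhp, zero_mul]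
  rw [← frob_rankOne, ← frob_rankOne, frob_eq_norm, frob_eq_norm, frob_eq_norm, sq, sq, sq,
    ← norm_add_sq_eq_norm_sq_add_norm_sq_of_inner_eq_zero _ _ horth]
  rfl

theorem frob_rankOne_add_rankOne_le (h c : Fin K → ℂ) (a x : Fin N → ℂ) :
    frob (rankOne h a + rankOne c x) ≤ √2 * ‖rankOne h a + rankOne c x‖ := by
  obtain ⟨q, p, hhp, hZ⟩ := exists_vinner_eq_zero_rankOne_add_rankOne_eq h c a x
  have hph : vinner p h = 0 := by
    rwa [vinner_eq_inner, inner_eq_zero_symm, ← vinner_eq_inner]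
  have hp := vnorm_mul_vnorm_le_norm_rankOne_add_rankOne q x hhp
  have hh := vnorm_mul_vnorm_le_norm_rankOne_add_rankOne x q hph
  rw [add_comm] at hh
  rw [hZ]
  refine le_of_pow_le_pow_left₀ two_ne_zero (by positivity) ?_
  rw [frob_sq_rankOne_add_rankOne q x hhp, mul_pow √2, Real.sq_sqrt zero_le_two]
  nlinarith [mul_nonneg (vnorm_nonneg h) (vnorm_nonneg q),
    mul_nonneg (vnorm_nonneg p) (vnorm_nonneg x)]

theorem frob_smul_rankOne_sub_rankOne_le (t : ℝ) (hhat h : Fin K → ℂ) (xhat x : Fin N → ℂ) :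
    frob (t • rankOne hhat xhat - rankOne h x) ≤ √2 * ‖t • rankOne hhat xhat - rankOne h x‖ := by
  have hZ : t • rankOne hhat xhat - rankOne h x
      = rankOne h (-x) + rankOne ((t : ℂ) • hhat) xhat := by
    ext k j
    simp only [rankOne, Matrix.smul_of, Matrix.sub_apply, Matrix.of_apply, Pi.smul_apply,
      Complex.real_smul, Pi.neg_apply, map_neg, mul_neg, smul_eq_mul, Matrix.add_apply]
    ring
  rw [hZ]
  exact frob_rankOne_add_rankOne_le _ _ _ _

theorem frob_sub_rankOne_le_five_mul {R M : Matrix (Fin K) (Fin N) ℂ} {hhat h : Fin K → ℂ}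
    {xhat x : Fin N → ℂ} {t : ℝ}
    (hR : frob (R - t • rankOne hhat xhat) ≤ ‖t • rankOne hhat xhat - rankOne h x‖)
    (hbest : ‖M - t • rankOne hhat xhat‖ ≤ ‖M - rankOne h x‖) :
    frob (R - rankOne h x) ≤ 5 * ‖M - rankOne h x‖ := by
  set D := t • rankOne hhat xhat
  have hDH : ‖D - rankOne h x‖ ≤ 2 * ‖M - rankOne h x‖ := by
    have := norm_sub_le_norm_sub_add_norm_sub D M (rankOne h x)
    rw [norm_sub_rev D M] at this
    linarith
  have hsqrt2 : √2 ≤ 3 / 2 := by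
    rw [Real.sqrt_le_left (by norm_num)]
    norm_num
  calc frob (R - rankOne h x) = frob ((R - D) + (D - rankOne h x)) := by
        rw [sub_add_sub_cancel]
    _ ≤ frob (R - D) + frob (D - rankOne h x) := frob_add_le _ _
    _ ≤ ‖D - rankOne h x‖ + √2 * ‖D - rankOne h x‖ :=
        add_le_add hR (frob_smul_rankOne_sub_rankOne_le _ _ _ _ _)
    _ ≤ 5 * ‖M - rankOne h x‖ := by nlinarith [norm_nonneg (D - rankOne h x)]

end RankTwo

section SpectralInit

variable {K N L : ℕ} (b : Fin L → Fin K → ℂ)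

theorem vnorm_le_of_isMinOn_coherence {r : ℝ} {u w : Fin K → ℂ}
    (hu : ∀ l, √L * ‖vinner (b l) u‖ ≤ r)
    (hmin : ∀ z : Fin K → ℂ, (∀ l, √L * ‖vinner (b l) z‖ ≤ r) → vnorm (u - w) ≤ vnorm (z - w)) :
    vnorm u ≤ vnorm w := by
  set Q : Set (EuclideanSpace ℂ (Fin K)) := {z | ∀ l, √L * ‖vinner (b l) z.ofLp‖ ≤ r}
  have hQ : StarConvex ℝ 0 Q := by
    refine starConvex_zero_iff.2 fun z hz t ht0 ht1 l => ?_
    rw [WithLp.ofLp_smul, ← Complex.coe_smul, vinner_smul_right, norm_mul, Complex.norm_real,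
      Real.norm_of_nonneg ht0, mul_left_comm]
    exact (mul_le_of_le_one_left (by positivity) ht1).trans (hz l)
  have hmin' : IsMinOn (fun z => ‖z - WithLp.toLp 2 w‖) Q (WithLp.toLp 2 u) := fun z hz => by
    simpa [vnorm_eq_norm] using hmin z.ofLp hz
  simpa [vnorm_eq_norm] using norm_le_of_isMinOn_norm_sub hQ hu hmin'

theorem coherence_smul_le {h : Fin K → ℂ} {c : ℂ} {μ d d' : ℝ} (hμ : 0 ≤ μ)
    (hμh : ∀ l, √L * ‖vinner (b l) h‖ ≤ μ * vnorm h) (hh : vnorm h = √d) (hc : ‖c‖ ≤ √d)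
    (hd' : 0 < d') (hdd' : d ≤ 2 * d') (l : Fin L) :
    √L * ‖vinner (b l) ((c / √d') • h)‖ ≤ 2 * √d' * μ := by
  have ht : 0 < √d' := Real.sqrt_pos.2 hd'
  have htt : √d' * √d' = d' := Real.mul_self_sqrt hd'.le
  have hdd : √d * √d ≤ 2 * d' := by
    have := Real.sqrt_le_sqrt hdd'
    rw [← Real.mul_self_sqrt (by positivity : 0 ≤ 2 * d')]
    exact mul_self_le_mul_self (Real.sqrt_nonneg _) this
  have hA := hh ▸ hμh l
  rw [vinner_smul_right, norm_mul, norm_div, Complex.norm_real, Real.norm_of_nonneg ht.le,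
    mul_left_comm, div_mul_eq_mul_div, div_le_iff₀ ht]
  nlinarith [norm_nonneg c, Real.sqrt_nonneg d,
    mul_nonneg (Real.sqrt_nonneg L) (norm_nonneg (vinner (b l) h))]

theorem frob_rankOne_sub_smul_rankOne_le {h u hhat : Fin K → ℂ} {x xhat : Fin N → ℂ} {μ d d' : ℝ}
    (hμ : 0 ≤ μ) (hμh : ∀ l, √L * ‖vinner (b l) h‖ ≤ μ * vnorm h) (hh : vnorm h = √d)
    (hx : vnorm x = √d) (hxhat : vnorm xhat = 1) (hd' : 0 < d') (hdd' : d ≤ 2 * d')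
    (hmin : ∀ z, (∀ l, √L * ‖vinner (b l) z‖ ≤ 2 * √d' * μ) →
      vnorm (fun k => u k - (√d' : ℂ) * hhat k) ≤ vnorm (fun k => z k - (√d' : ℂ) * hhat k)) :
    frob (rankOne u (fun j => (√d' : ℂ) * xhat j) - d' • rankOne hhat xhat)
      ≤ ‖d' • rankOne hhat xhat - rankOne h x‖ := by
  have ht : 0 < √d' := Real.sqrt_pos.2 hd'
  have htt : (√d' : ℂ) * √d' = d' := by exact_mod_cast Real.mul_self_sqrt hd'.le
  set c := vinner x xhat
  have hc : ‖c‖ ≤ √d := (norm_vinner_le x xhat).trans (by rw [hx, hxhat, mul_one])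
  have hp := hmin ((c / √d') • h) (coherence_smul_le b hμ hμh hh hc hd' hdd')
  have hsplit : rankOne u (fun j => (√d' : ℂ) * xhat j) - d' • rankOne hhat xhat
      = rankOne (fun k => u k - (√d' : ℂ) * hhat k) (fun j => (√d' : ℂ) * xhat j) := by
    ext k j
    simp only [rankOne, map_mul, Complex.conj_ofReal, Matrix.smul_of, Matrix.sub_apply,
      Matrix.of_apply, Pi.smul_apply, Complex.real_smul, ← htt]
    ring
  have hvec : (fun k => (√d' : ℂ) * (((c / √d') • h) k - √d' * hhat k))
      = (rankOne h x - d' • rankOne hhat xhat) *ᵥ xhat := by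
    rw [Matrix.sub_mulVec, Matrix.smul_mulVec, rankOne_mulVec, rankOne_mulVec, vinner_self, hxhat]
    ext k
    have ht' : (√d' : ℂ) ≠ 0 := by exact_mod_cast ht.ne'
    simp only [Pi.smul_apply, smul_eq_mul, Complex.ofReal_one, one_pow, one_smul, Pi.sub_apply,
      Complex.real_smul, ← htt]
    field_simp
    ring
  calc frob (rankOne u (fun j => (√d' : ℂ) * xhat j) - d' • rankOne hhat xhat)
      = √d' * vnorm (fun k => u k - (√d' : ℂ) * hhat k) := by
        rw [hsplit, frob_rankOne, vnorm_ofReal_mul_of_vnorm_eq_one ht.le hxhat, mul_comm]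
    _ ≤ √d' * vnorm (fun k => ((c / √d') • h) k - (√d' : ℂ) * hhat k) := by gcongr
    _ = vnorm ((rankOne h x - d' • rankOne hhat xhat) *ᵥ xhat) := by
        rw [← hvec, vnorm_smul, Complex.norm_real, Real.norm_of_nonneg ht.le]
    _ ≤ ‖rankOne h x - d' • rankOne hhat xhat‖ := by
        simpa [hxhat] using vnorm_mulVec_le (rankOne h x - d' • rankOne hhat xhat) xhat
    _ = ‖d' • rankOne hhat xhat - rankOne h x‖ := norm_sub_rev _ _

end SpectralInit

theorem norm_mem_Icc_of_norm_sub_rankOne_le {K N : ℕ} {M : Matrix (Fin K) (Fin N) ℂ}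
    {h : Fin K → ℂ} {x : Fin N → ℂ} {d ξ : ℝ} (hd : 0 ≤ d) (hh : vnorm h = √d)
    (hx : vnorm x = √d) (hξ : ξ ≤ 1 / 10) (hM : ‖M - rankOne h x‖ ≤ ξ * d) :
    0.9 * d ≤ ‖M‖ ∧ ‖M‖ ≤ 1.1 * d := by
  have hH : ‖rankOne h x‖ = d := by rw [norm_rankOne, hh, hx, Real.mul_self_sqrt hd]
  have := abs_le.1 ((abs_norm_sub_norm_le M (rankOne h x)).trans hM)
  constructor <;> nlinarith

theorem sqrt_le_two_div_sqrt_three_mul_sqrt {a b : ℝ} (h : a ≤ 4 / 3 * b) :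
    √a ≤ 2 / √3 * √b := by
  have h43 : √(4 / 3) = 2 / √3 := by
    rw [Real.sqrt_div zero_le_four, show (4 : ℝ) = 2 ^ 2 by norm_num, Real.sqrt_sq zero_le_two]
  rw [← h43, ← Real.sqrt_mul (by norm_num)]
  exact Real.sqrt_le_sqrt h

theorem xi_le_one_div_ten {s : ℕ} (hs : 0 < s) {κ ε : ℝ} (hκ : 1 ≤ κ) (hε : ε ≤ 1 / 15) :
    ε / (10 * √(2 * s) * κ) ≤ 1 / 10 := by
  have h2s : 1 ≤ √(2 * s) := Real.one_le_sqrt.2 (by norm_cast; omega)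
  rw [div_le_iff₀ (by positivity)]
  nlinarith

theorem five_mul_xi_le {s : ℕ} (hs : 0 < s) {κ ε : ℝ} (hκ : 0 < κ) (hε : 0 ≤ ε) :
    5 * (ε / (10 * √(2 * s) * κ)) ≤ 2 * ε / (5 * √s * κ) := by
  have hs' : 0 < √(s : ℝ) := Real.sqrt_pos.2 (by exact_mod_cast hs)
  have h2 : 5 / 4 ≤ √2 := Real.le_sqrt_of_sq_le (by norm_num)
  rw [Real.sqrt_mul zero_le_two, mul_div_assoc', div_le_div_iff₀ (by positivity) (by positivity)]
  nlinarith [mul_nonneg (mul_nonneg hε hs'.le) hκ.le]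

theorem statement18_general
    {K N L s : ℕ}
    (b : Fin L → Fin K → ℂ)
    (a : Fin s → Fin L → Fin N → ℂ)
    (h0 : Fin s → Fin K → ℂ) (x0 : Fin s → Fin N → ℂ)
    (d0 : Fin s → ℝ) (hd0 : ∀ i, 0 < d0 i)
    (hh0 : ∀ i, vnorm (h0 i) = Real.sqrt (d0 i))
    (hx0 : ∀ i, vnorm (x0 i) = Real.sqrt (d0 i))
    (e : Fin L → ℂ)
    (μ ε ξ : ℝ) (hμ : 0 < μ) (hμh : muhLe b h0 μ)
    (hκ : 1 ≤ kappa d0)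
    (hε : 0 < ε) (hε15 : ε ≤ 1 / 15)
    (hξ : ξ = ε / (10 * Real.sqrt (2 * (s : ℝ)) * kappa d0))
    (hAy : ∀ i, opNorm (calAdj b (a i) (yvec b a h0 x0 e) - rankOne (h0 i) (x0 i))
        ≤ ξ * d0 i)
    (di : Fin s → ℝ)
    (hdi : ∀ i, di i = opNorm (calAdj b (a i) (yvec b a h0 x0 e)))
    (hhat : Fin s → Fin K → ℂ) (xhat : Fin s → Fin N → ℂ)
    (hhatu : ∀ i, vnorm (hhat i) = 1) (xhatu : ∀ i, vnorm (xhat i) = 1)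
    (hbest : ∀ i, ∀ Z : Matrix (Fin K) (Fin N) ℂ, Z.rank ≤ 1 →
      opNorm (calAdj b (a i) (yvec b a h0 x0 e) - di i • rankOne (hhat i) (xhat i))
        ≤ opNorm (calAdj b (a i) (yvec b a h0 x0 e) - Z))
    (u0 : Fin s → Fin K → ℂ)
    (hu0Q : ∀ i l, Real.sqrt L * ‖vinner (b l) (u0 i)‖ ≤ 2 * Real.sqrt (di i) * μ)
    (hu0min : ∀ i, ∀ z : Fin K → ℂ,
      (∀ l, Real.sqrt L * ‖vinner (b l) z‖ ≤ 2 * Real.sqrt (di i) * μ) →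
      vnorm (fun k => u0 i k - (Real.sqrt (di i) : ℂ) * hhat i k)
        ≤ vnorm (fun k => z k - (Real.sqrt (di i) : ℂ) * hhat i k))
    (v0 : Fin s → Fin N → ℂ)
    (hv0 : ∀ i j, v0 i j = (Real.sqrt (di i) : ℂ) * xhat i j) :
    ∀ i,
      (0.9 * d0 i ≤ di i ∧ di i ≤ 1.1 * d0 i)
      ∧ vnorm (u0 i) ≤ 2 / Real.sqrt 3 * Real.sqrt (d0 i)
      ∧ vnorm (v0 i) ≤ 2 / Real.sqrt 3 * Real.sqrt (d0 i)
      ∧ (∀ l, Real.sqrt L * ‖vinner (b l) (u0 i)‖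
          ≤ 4 / Real.sqrt 3 * Real.sqrt (d0 i) * μ)
      ∧ frob (rankOne (u0 i) (v0 i) - rankOne (h0 i) (x0 i)) ≤ 5 * ξ * d0 i
      ∧ 5 * ξ * d0 i ≤ 2 * ε / (5 * Real.sqrt s * kappa d0) * d0 i := by
  intro i
  simp only [opNorm_eq_norm] at hAy hdi hbest
  have hs : 0 < s := Fin.pos i
  have hξ10 : ξ ≤ 1 / 10 := hξ ▸ xi_le_one_div_ten hs hκ hε15
  have hdi_mem : 0.9 * d0 i ≤ di i ∧ di i ≤ 1.1 * d0 i :=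
    hdi i ▸ norm_mem_Icc_of_norm_sub_rankOne_le (hd0 i).le (hh0 i) (hx0 i) hξ10 (hAy i)
  have hdi_pos : 0 < di i := by linarith [hd0 i, hdi_mem.1]
  have hsqrt : √(di i) ≤ 2 / √3 * √(d0 i) := sqrt_le_two_div_sqrt_three_mul_sqrt (by linarith)
  have hu : vnorm (u0 i) ≤ √(di i) :=
    (vnorm_le_of_isMinOn_coherence b (hu0Q i) (hu0min i)).trans_eq
      (vnorm_ofReal_mul_of_vnorm_eq_one (Real.sqrt_nonneg _) (hhatu i))
  have hv : vnorm (v0 i) = √(di i) := by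
    rw [funext (hv0 i), vnorm_ofReal_mul_of_vnorm_eq_one (Real.sqrt_nonneg _) (xhatu i)]
  refine ⟨hdi_mem, hu.trans hsqrt, hv ▸ hsqrt, fun l => (hu0Q i l).trans ?_, ?_, ?_⟩
  · rw [show 4 / √3 * √(d0 i) * μ = 2 * (2 / √3 * √(d0 i)) * μ by ring]
    gcongr
  · rw [funext (hv0 i), mul_assoc]
    refine (frob_sub_rankOne_le_five_mul ?_ (hbest i _ (rank_rankOne_le _ _))).trans ?_
    · exact frob_rankOne_sub_smul_rankOne_le b hμ.le (hμh i) (hh0 i) (hx0 i) (xhatu i) hdi_pos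
        (by linarith) (hu0min i)
    · gcongr
      exact hAy i
  · rw [hξ]
    exact mul_le_mul_of_nonneg_right (five_mul_xi_le hs (by linarith) hε.le) (hd0 i).le

/-- guarantees for the spectral initialization. -/
theorem statement18
    {K N L s : ℕ} (hK : 0 < K) (hN : 0 < N) (hL : 0 < L) (hs : 1 ≤ s)
    (b : Fin L → Fin K → ℂ) (hb : BtBeqI b)
    (a : Fin s → Fin L → Fin N → ℂ)
    (h0 : Fin s → Fin K → ℂ) (x0 : Fin s → Fin N → ℂ)
    (d0 : Fin s → ℝ) (hd0 : ∀ i, 0 < d0 i)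
    (hh0 : ∀ i, vnorm (h0 i) = Real.sqrt (d0 i))
    (hx0 : ∀ i, vnorm (x0 i) = Real.sqrt (d0 i))
    (e : Fin L → ℂ)
    (μ ε ξ : ℝ) (hμ : 0 < μ) (hμh : muhLe b h0 μ)
    (hκ : 1 ≤ kappa d0)
    (hε : 0 < ε) (hε15 : ε ≤ 1 / 15)
    (hξ : ξ = ε / (10 * Real.sqrt (2 * (s : ℝ)) * kappa d0))
    (hAy : ∀ i, opNorm (calAdj b (a i) (yvec b a h0 x0 e) - rankOne (h0 i) (x0 i))
        ≤ ξ * d0 i)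
    (di : Fin s → ℝ)
    (hdi : ∀ i, di i = opNorm (calAdj b (a i) (yvec b a h0 x0 e)))
    (hhat : Fin s → Fin K → ℂ) (xhat : Fin s → Fin N → ℂ)
    (hhatu : ∀ i, vnorm (hhat i) = 1) (xhatu : ∀ i, vnorm (xhat i) = 1)
    (hbest : ∀ i, ∀ Z : Matrix (Fin K) (Fin N) ℂ, Z.rank ≤ 1 →
      opNorm (calAdj b (a i) (yvec b a h0 x0 e) - di i • rankOne (hhat i) (xhat i))
        ≤ opNorm (calAdj b (a i) (yvec b a h0 x0 e) - Z))
    (u0 : Fin s → Fin K → ℂ)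
    (hu0Q : ∀ i l, Real.sqrt L * ‖vinner (b l) (u0 i)‖ ≤ 2 * Real.sqrt (di i) * μ)
    (hu0min : ∀ i, ∀ z : Fin K → ℂ,
      (∀ l, Real.sqrt L * ‖vinner (b l) z‖ ≤ 2 * Real.sqrt (di i) * μ) →
      vnorm (fun k => u0 i k - (Real.sqrt (di i) : ℂ) * hhat i k)
        ≤ vnorm (fun k => z k - (Real.sqrt (di i) : ℂ) * hhat i k))
    (v0 : Fin s → Fin N → ℂ)
    (hv0 : ∀ i j, v0 i j = (Real.sqrt (di i) : ℂ) * xhat i j) :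
    ∀ i,
      (0.9 * d0 i ≤ di i ∧ di i ≤ 1.1 * d0 i)
      ∧ vnorm (u0 i) ≤ 2 / Real.sqrt 3 * Real.sqrt (d0 i)
      ∧ vnorm (v0 i) ≤ 2 / Real.sqrt 3 * Real.sqrt (d0 i)
      ∧ (∀ l, Real.sqrt L * ‖vinner (b l) (u0 i)‖
          ≤ 4 / Real.sqrt 3 * Real.sqrt (d0 i) * μ)
      ∧ frob (rankOne (u0 i) (v0 i) - rankOne (h0 i) (x0 i)) ≤ 5 * ξ * d0 i
      ∧ 5 * ξ * d0 i ≤ 2 * ε / (5 * Real.sqrt s * kappa d0) * d0 i :=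
  statement18_general b a h0 x0 d0 hd0 hh0 hx0 e μ ε ξ hμ hμh hκ hε hε15 hξ hAy di hdi hhat xhat
    hhatu xhatu hbest u0 hu0Q hu0min v0 hv0

end RGD
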